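/- Fix r > 0 and the Dirichlet case z_n = n. Suppose W, W̃ ∈ L²(0,π) with mean zero and ‖W‖, ‖W̃‖ ≤ C_r; let Δ(ρ²) = sin(πρ)/ρ + ρ^{-2}∫₀^π cos(tρ)W(t)dt and similarly Δ̃; let (ρ_n), (ρ̃_n) satisfy ρ_n² zeros of Δ, ρ̃_n² zeros of Δ̃, with Σ n²|ρ_n − n|² ≤ r², Σ n²|ρ̃_n − n|² ≤ r², and ‖Ŵ‖_{L²} ≤ C_r Ξ where Ξ = (Σ n²|ρ_n − ρ̃_n|²)^{1/2}. Define f(ρ) = Δ(ρ²)/(ρ − ρ_n) and g(ρ) = Δ̂(ρ²) + (ρ_n − ρ̃_n) f(ρ). Then g(ρ̃_n) = 0, and there is a constant C'_r depending only on r such that |g(ρ)| ≤ C'_r Ξ / n² for all ρ with |ρ − ρ̃_n| ≤ 2r and all sufficiently large n; consequently |d̂_n| := |lim_{ρ→n} g(ρ)/(ρ − ρ̃_n)| ≤ C''_r Ξ / n². -/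

import Mathlib

/-!
Near `n` the characteristic function `Δ` is `O(1/n)` and `Δ - Δ̃ = O(Ξ/n²)`, while
`|ρ_n - ρ̃_n| ≤ Ξ/n`. Schwarz's lemma at the zero `ρ_n` of `Δ` turns the first bound into
`Δ(ρ)/(ρ - ρ_n) = O(1/n)`, so `g = O(Ξ/n²)`. Since `Δ̃(ρ̃_n) = 0`, `g` vanishes at `ρ̃_n`, and a
second application of Schwarz's lemma, at `ρ̃_n`, bounds `g(ρ)/(ρ - ρ̃_n)` by `O(Ξ/n²)` as well.
-/

open MeasureTheory Filter Topology Metric Set Real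

lemma Complex.norm_exp_mul_I_le (z : ℂ) :
    ‖Complex.exp (z * Complex.I)‖ ≤ Real.exp |z.im| := by
  rw [Complex.norm_exp]
  simpa using Real.exp_le_exp.2 (neg_le_abs z.im)

lemma Complex.norm_cos_le_exp_abs_im (z : ℂ) : ‖Complex.cos z‖ ≤ Real.exp |z.im| := by
  have h₁ := Complex.norm_exp_mul_I_le z
  have h₂ := Complex.norm_exp_mul_I_le (-z)
  rw [Complex.neg_im, abs_neg] at h₂
  calc ‖Complex.cos z‖
      = ‖Complex.exp (z * Complex.I) + Complex.exp (-z * Complex.I)‖ / 2 := by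
        rw [Complex.cos, norm_div, Complex.norm_two]
    _ ≤ (‖Complex.exp (z * Complex.I)‖ + ‖Complex.exp (-z * Complex.I)‖) / 2 := by
        gcongr; exact norm_add_le _ _
    _ ≤ Real.exp |z.im| := by linarith

lemma Complex.norm_sin_le_exp_abs_im (z : ℂ) : ‖Complex.sin z‖ ≤ Real.exp |z.im| := by
  have h₁ := Complex.norm_exp_mul_I_le z
  have h₂ := Complex.norm_exp_mul_I_le (-z)
  rw [Complex.neg_im, abs_neg] at h₂
  calc ‖Complex.sin z‖
      = ‖Complex.exp (-z * Complex.I) - Complex.exp (z * Complex.I)‖ / 2 := by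
        rw [Complex.sin, norm_div, norm_mul, Complex.norm_I, mul_one, Complex.norm_two]
    _ ≤ (‖Complex.exp (-z * Complex.I)‖ + ‖Complex.exp (z * Complex.I)‖) / 2 := by
        gcongr; exact norm_sub_le _ _
    _ ≤ Real.exp |z.im| := by linarith

lemma abs_im_ofReal_mul_le {t R : ℝ} (ht : t ∈ Icc 0 π) {z : ℂ} (hz : |z.im| ≤ R) :
    |((t : ℂ) * z).im| ≤ π * R := by
  rw [Complex.im_ofReal_mul, abs_mul, abs_of_nonneg ht.1]
  exact mul_le_mul ht.2 hz (abs_nonneg _) pi_pos.le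

lemma integral_norm_le_sqrt_pi_mul {W : ℝ → ℂ} (hW : MemLp W 2 (volume.restrict (Ioc 0 π))) :
    ∫ t in (0:ℝ)..π, ‖W t‖ ≤ √π * √(∫ t in (0:ℝ)..π, ‖W t‖ ^ 2) := by
  have := integral_mul_le_Lp_mul_Lq_of_nonneg Real.HolderConjugate.two_two
    (Eventually.of_forall fun t => norm_nonneg (W t)) (Eventually.of_forall fun _ => zero_le_one)
    (by simpa using hW.norm) (memLp_const (1 : ℝ) (μ := volume.restrict (Ioc 0 π)))
  simp only [mul_one, Real.one_rpow, integral_const, smul_eq_mul] at this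
  rw [intervalIntegral.integral_of_le pi_pos.le, intervalIntegral.integral_of_le pi_pos.le,
    sqrt_eq_rpow, sqrt_eq_rpow, mul_comm]
  convert this using 3
  · norm_cast
  · simp [Measure.real, pi_pos.le]

section CosTransform

variable {W W' : ℝ → ℂ}

noncomputable def cosTransform (W : ℝ → ℂ) (z : ℂ) : ℂ :=
  ∫ t in (0:ℝ)..π, Complex.cos (t * z) * W t

lemma norm_cos_ofReal_mul_le {t R : ℝ} (ht : t ∈ Icc 0 π) {z : ℂ} (hz : |z.im| ≤ R) :
    ‖Complex.cos (t * z)‖ ≤ Real.exp (π * R) :=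
  (Complex.norm_cos_le_exp_abs_im _).trans (Real.exp_le_exp.2 (abs_im_ofReal_mul_le ht hz))

lemma norm_sin_ofReal_mul_le {t R : ℝ} (ht : t ∈ Icc 0 π) {z : ℂ} (hz : |z.im| ≤ R) :
    ‖Complex.sin (t * z)‖ ≤ Real.exp (π * R) :=
  (Complex.norm_sin_le_exp_abs_im _).trans (Real.exp_le_exp.2 (abs_im_ofReal_mul_le ht hz))

lemma intervalIntegrable_cos_mul (hW : IntegrableOn W (Ioc 0 π)) (z : ℂ) :
    IntervalIntegrable (fun t : ℝ => Complex.cos (t * z) * W t) volume 0 π := by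
  rw [intervalIntegrable_iff_integrableOn_Ioc_of_le pi_pos.le]
  refine hW.bdd_mul (c := Real.exp (π * |z.im|)) (by fun_prop)
    ((ae_restrict_iff' measurableSet_Ioc).2 (.of_forall fun t ht => ?_))
  exact norm_cos_ofReal_mul_le (Ioc_subset_Icc_self ht) le_rfl

lemma cosTransform_sub (hW : IntegrableOn W (Ioc 0 π)) (hW' : IntegrableOn W' (Ioc 0 π))
    (z : ℂ) :
    cosTransform (W - W') z = cosTransform W z - cosTransform W' z := by
  rw [cosTransform, cosTransform, cosTransform, ← intervalIntegral.integral_sub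
    (intervalIntegrable_cos_mul hW z) (intervalIntegrable_cos_mul hW' z)]
  simp only [Pi.sub_apply, mul_sub]

lemma differentiable_cosTransform (hW : IntegrableOn W (Ioc 0 π)) :
    Differentiable ℂ (cosTransform W) := by
  intro z
  have hmeas : AEStronglyMeasurable W (volume.restrict (uIoc 0 π)) := by
    rw [uIoc_of_le pi_pos.le]; exact hW.aestronglyMeasurable
  refine (intervalIntegral.hasDerivAt_integral_of_dominated_loc_of_deriv_le
    (F' := fun x t => -Complex.sin (t * x) * t * W t)
    (bound := fun t => Real.exp (π * (|z.im| + 1)) * π * ‖W t‖) (ball_mem_nhds z one_pos)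
    (.of_forall fun x => (by fun_prop : Continuous _).aestronglyMeasurable.mul hmeas)
    (intervalIntegrable_cos_mul hW z)
    ((by fun_prop : Continuous _).aestronglyMeasurable.mul hmeas) (.of_forall ?_)
    ?_ (.of_forall ?_)).2.differentiableAt
  · intro t ht x hx
    rw [uIoc_of_le pi_pos.le] at ht
    have hx : |x.im| ≤ |z.im| + 1 := by
      have := Complex.abs_im_le_norm (x - z)
      rw [Complex.sub_im] at this
      linarith [abs_sub_abs_le_abs_sub x.im z.im, (mem_ball_iff_norm.1 hx).le]
    rw [norm_mul, norm_mul, norm_neg, Complex.norm_real, Real.norm_of_nonneg ht.1.le]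
    gcongr
    · exact ht.1.le
    · exact norm_sin_ofReal_mul_le (Ioc_subset_Icc_self ht) hx
    · exact ht.2
  · exact (intervalIntegrable_iff_integrableOn_Ioc_of_le pi_pos.le).2 (hW.norm.const_mul _)
  · intro t _ x _
    simpa [mul_comm] using ((Complex.hasDerivAt_cos _).comp x
      ((hasDerivAt_id x).const_mul (t : ℂ))).mul_const (W t)

lemma norm_cosTransform_le (hW : MemLp W 2 (volume.restrict (Ioc 0 π))) {C : ℝ}
    (hWC : √(∫ t in (0:ℝ)..π, ‖W t‖ ^ 2) ≤ C) {z : ℂ} {R : ℝ} (hz : |z.im| ≤ R) :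
    ‖cosTransform W z‖ ≤ Real.exp (π * R) * (√π * C) := by
  have hWi : IntegrableOn W (Ioc 0 π) := hW.integrable one_le_two
  calc ‖cosTransform W z‖ ≤ ∫ t in (0:ℝ)..π, Real.exp (π * R) * ‖W t‖ := by
        refine intervalIntegral.norm_integral_le_of_norm_le pi_pos.le
          (.of_forall fun t ht => ?_)
          ((intervalIntegrable_iff_integrableOn_Ioc_of_le pi_pos.le).2 (hWi.norm.const_mul _))
        rw [norm_mul]
        gcongr
        exact norm_cos_ofReal_mul_le (Ioc_subset_Icc_self ht) hz
    _ ≤ _ := by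
        rw [intervalIntegral.integral_const_mul]
        gcongr
        exact (integral_norm_le_sqrt_pi_mul hW).trans (by gcongr)

end CosTransform

section CharacteristicFn

variable {W W' : ℝ → ℂ}

/-- The paper's `Δ(ρ²)`, as a function of `ρ`. -/
noncomputable def characteristicFn (W : ℝ → ℂ) (z : ℂ) : ℂ :=
  Complex.sin (π * z) / z + cosTransform W z / z ^ 2

lemma differentiableAt_characteristicFn (hW : IntegrableOn W (Ioc 0 π)) {z : ℂ}
    (hz : z ≠ 0) :
    DifferentiableAt ℂ (characteristicFn W) z :=
  ((by fun_prop : Differentiable ℂ fun z : ℂ => Complex.sin (π * z)) z |>.div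
    differentiableAt_id hz).add
    ((differentiable_cosTransform hW z).div (differentiableAt_pow 2) (pow_ne_zero 2 hz))

lemma characteristicFn_sub (hW : IntegrableOn W (Ioc 0 π)) (hW' : IntegrableOn W' (Ioc 0 π))
    (z : ℂ) :
    characteristicFn W z - characteristicFn W' z = cosTransform (W - W') z / z ^ 2 := by
  rw [characteristicFn, characteristicFn, cosTransform_sub hW hW']
  ring

lemma half_le_norm_and_abs_im_le {x R : ℝ} {z : ℂ} (hz : z ∈ closedBall (x : ℂ) R)
    (hR : 2 * R ≤ x) : x / 2 ≤ ‖z‖ ∧ |z.im| ≤ R := by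
  rw [mem_closedBall, dist_eq_norm] at hz
  have hR₀ : 0 ≤ R := (norm_nonneg _).trans hz
  constructor
  · have := norm_sub_norm_le (x : ℂ) z
    rw [Complex.norm_real, Real.norm_of_nonneg (by linarith), norm_sub_rev] at this
    linarith
  · simpa using (Complex.abs_im_le_norm (z - x)).trans hz

lemma differentiableOn_characteristicFn (hW : IntegrableOn W (Ioc 0 π)) {x R : ℝ} (hx : 0 < x)
    (hR : 2 * R ≤ x) : DifferentiableOn ℂ (characteristicFn W) (closedBall (x : ℂ) R) :=
  fun z hz => by
    have := (half_le_norm_and_abs_im_le hz hR).1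
    exact (differentiableAt_characteristicFn hW
      (norm_pos_iff.1 (by linarith))).differentiableWithinAt

lemma norm_cosTransform_div_sq_le (hW : MemLp W 2 (volume.restrict (Ioc 0 π))) {C : ℝ}
    (hWC : √(∫ t in (0:ℝ)..π, ‖W t‖ ^ 2) ≤ C) {x R : ℝ} (hx : 0 < x) (hR : 2 * R ≤ x) {z : ℂ}
    (hz : z ∈ closedBall (x : ℂ) R) :
    ‖cosTransform W z / z ^ 2‖ ≤ 4 * Real.exp (π * R) * √π * C / x ^ 2 := by
  obtain ⟨hzx, hzim⟩ := half_le_norm_and_abs_im_le hz hR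
  have hC : 0 ≤ C := (Real.sqrt_nonneg _).trans hWC
  rw [norm_div, norm_pow]
  calc _ ≤ Real.exp (π * R) * (√π * C) / (x / 2) ^ 2 := by
        gcongr
        exact norm_cosTransform_le hW hWC hzim
    _ = _ := by field_simp; ring

lemma norm_characteristicFn_le (hW : MemLp W 2 (volume.restrict (Ioc 0 π))) {C : ℝ}
    (hWC : √(∫ t in (0:ℝ)..π, ‖W t‖ ^ 2) ≤ C) {x R : ℝ} (hx : 1 ≤ x) (hR : 2 * R ≤ x) {z : ℂ}
    (hz : z ∈ closedBall (x : ℂ) R) :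
    ‖characteristicFn W z‖ ≤ 2 * Real.exp (π * R) * (1 + 2 * √π * C) / x := by
  obtain ⟨hzx, hzim⟩ := half_le_norm_and_abs_im_le hz hR
  have hsin : ‖Complex.sin (π * z)‖ ≤ Real.exp (π * R) :=
    norm_sin_ofReal_mul_le (right_mem_Icc.2 pi_pos.le) hzim
  have hx₀ : 0 < x := by linarith
  have hC : 0 ≤ C := (Real.sqrt_nonneg _).trans hWC
  calc ‖characteristicFn W z‖
      ≤ Real.exp (π * R) / (x / 2) + 4 * Real.exp (π * R) * √π * C / x ^ 2 := by
        refine (norm_add_le _ _).trans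
          (add_le_add ?_ (norm_cosTransform_div_sq_le hW hWC hx₀ hR hz))
        rw [norm_div]
        gcongr
    _ ≤ Real.exp (π * R) / (x / 2) + 4 * Real.exp (π * R) * √π * C / x := by
        gcongr
        exact le_self_pow₀ hx two_ne_zero
    _ = _ := by field_simp; ring

end CharacteristicFn

section Perturbation

variable {f g : ℂ → ℂ} {b b' : ℂ} {s A B : ℝ}

lemma perturbation_eq_zero (hfb : f b = 0) (hgb' : g b' = 0) :
    f b' - g b' + (b - b') * (f b' / (b' - b)) = 0 := by
  rcases eq_or_ne b' b with rfl | hne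
  · simp [hfb, hgb']
  · rw [hgb', sub_zero, ← neg_sub b' b, neg_mul, mul_div_cancel₀ _ (sub_ne_zero.2 hne),
      add_neg_cancel]

lemma norm_dslope_le_of_mapsTo (hf : DifferentiableOn ℂ f (ball b s)) (hfb : f b = 0)
    (hA : MapsTo f (ball b s) (closedBall 0 A)) {z : ℂ} (hz : z ∈ ball b s) :
    ‖dslope f b z‖ ≤ A / s :=
  Complex.norm_dslope_le_div_of_mapsTo_ball hf (hfb ▸ hA) hz

lemma dslope_eq_div_sub (hfb : f b = 0) {z : ℂ} (hz : z ≠ b) :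
    dslope f b z = f z / (z - b) := by
  rw [dslope_of_ne f hz, slope_def_field, hfb, sub_zero]

lemma norm_div_sub_le_of_mapsTo (hf : DifferentiableOn ℂ f (ball b s)) (hfb : f b = 0)
    (hA : MapsTo f (ball b s) (closedBall 0 A)) {z : ℂ} (hz : z ∈ ball b s) :
    ‖f z / (z - b)‖ ≤ A / s := by
  have := norm_dslope_le_of_mapsTo hf hfb hA hz
  rcases eq_or_ne z b with rfl | hne
  · simpa using (norm_nonneg _).trans this
  · rwa [dslope_eq_div_sub hfb hne] at this

lemma norm_perturbation_le (hf : DifferentiableOn ℂ f (ball b s)) (hfb : f b = 0)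
    (hA : MapsTo f (ball b s) (closedBall 0 A)) (hB : ∀ z ∈ ball b s, ‖f z - g z‖ ≤ B)
    {z : ℂ} (hz : z ∈ ball b s) :
    ‖f z - g z + (b - b') * (f z / (z - b))‖ ≤ B + ‖b - b'‖ * (A / s) := by
  refine (norm_add_le _ _).trans (add_le_add (hB z hz) ?_)
  rw [norm_mul]
  gcongr
  exact norm_div_sub_le_of_mapsTo hf hfb hA hz

lemma eventually_ne_nhdsNE (p q : ℂ) : ∀ᶠ z in 𝓝[≠] p, z ≠ q := by
  rcases eq_or_ne p q with rfl | hne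
  · exact self_mem_nhdsWithin
  · exact eventually_ne_nhdsWithin hne

/-- Schwarz's lemma, applied to `f` at `b` and then to the holomorphic extension
`f - g + (b - b') * dslope f b` of the perturbation at its zero `b'`. -/
lemma norm_le_of_tendsto_perturbation_div {s' : ℝ} (hf : DifferentiableOn ℂ f (ball b s))
    (hg : DifferentiableOn ℂ g (ball b s)) (hfb : f b = 0) (hgb' : g b' = 0)
    (hA : MapsTo f (ball b s) (closedBall 0 A)) (hB : ∀ z ∈ ball b s, ‖f z - g z‖ ≤ B)
    (hs' : ball b' s' ⊆ ball b s) {p L : ℂ} (hp : p ∈ ball b' s')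
    (hL : Tendsto (fun z => (f z - g z + (b - b') * (f z / (z - b))) / (z - b')) (𝓝[≠] p)
      (𝓝 L)) :
    ‖L‖ ≤ (B + ‖b - b'‖ * (A / s)) / s' := by
  set F : ℂ → ℂ := fun z => f z - g z + (b - b') * dslope f b z
  have hb'mem : b' ∈ ball b s := hs' (mem_ball_self (pos_of_mem_ball hp))
  have hF : DifferentiableOn ℂ F (ball b s) :=
    (hf.sub hg).add (((Complex.differentiableOn_dslope
      (isOpen_ball.mem_nhds (mem_ball_self (pos_of_mem_ball hb'mem)))).2 hf).const_mul _)
  have hFb' : F b' = 0 := by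
    rcases eq_or_ne b' b with rfl | hne
    · simp [F, hfb, hgb']
    · simpa [F, dslope_eq_div_sub hfb hne] using perturbation_eq_zero (g := g) hfb hgb'
  have hFmaps : MapsTo F (ball b s) (closedBall 0 (B + ‖b - b'‖ * (A / s))) :=
    fun z hz => by
    rw [mem_closedBall_zero_iff]
    refine (norm_add_le _ _).trans (add_le_add (hB z hz) ?_)
    rw [norm_mul]
    gcongr
    exact norm_dslope_le_of_mapsTo hf hfb hA hz
  refine le_of_tendsto hL.norm ?_
  filter_upwards [nhdsWithin_le_nhds (isOpen_ball.mem_nhds hp),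
    eventually_ne_nhdsNE p b, eventually_ne_nhdsNE p b'] with z hz hzb hzb'
  have hFz : F z = f z - g z + (b - b') * (f z / (z - b)) := by
    simp only [F, dslope_eq_div_sub hfb hzb]
  rw [← hFz, ← dslope_eq_div_sub hFb' hzb']
  exact norm_dslope_le_of_mapsTo (hF.mono hs') hFb' (hFmaps.mono_left hs') hz

lemma perturbation_bounds_of_near {a : ℂ} {r : ℝ} (hr : 0 < r) (hb : ‖b - a‖ ≤ r)
    (hb' : ‖b' - a‖ ≤ r) (hf : DifferentiableOn ℂ f (ball b (5 * r)))
    (hg : DifferentiableOn ℂ g (ball b (5 * r))) (hfb : f b = 0) (hgb' : g b' = 0)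
    (hA : MapsTo f (ball b (5 * r)) (closedBall 0 A))
    (hB : ∀ z ∈ ball b (5 * r), ‖f z - g z‖ ≤ B) :
    (∀ z : ℂ, ‖z - b'‖ ≤ 2 * r →
      ‖f z - g z + (b - b') * (f z / (z - b))‖ ≤ B + ‖b - b'‖ * (A / (5 * r))) ∧
    ∀ L : ℂ, Tendsto (fun z => (f z - g z + (b - b') * (f z / (z - b))) / (z - b')) (𝓝[≠] a)
      (𝓝 L) → ‖L‖ ≤ (B + ‖b - b'‖ * (A / (5 * r))) / (3 * r) := by
  have hbb' : ‖b' - b‖ ≤ 2 * r := by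
    linarith [norm_sub_le_norm_sub_add_norm_sub b' a b, norm_sub_rev a b]
  have hsub : closedBall b' (2 * r) ⊆ ball b (5 * r) := fun z hz => by
    rw [mem_closedBall_iff_norm] at hz
    rw [mem_ball_iff_norm]
    linarith [norm_sub_le_norm_sub_add_norm_sub z b' b]
  refine ⟨fun z hz => norm_perturbation_le hf hfb hA hB (hsub (mem_closedBall_iff_norm.2 hz)),
    fun L hL => norm_le_of_tendsto_perturbation_div hf hg hfb hgb' hA hB (fun z hz => ?_) ?_ hL⟩
  · rw [mem_ball_iff_norm] at hz ⊢
    linarith [norm_sub_le_norm_sub_add_norm_sub z b' b]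
  · rw [mem_ball_iff_norm, norm_sub_rev]
    linarith

end Perturbation

section Sequences

variable {E : Type*} [SeminormedAddCommGroup E] {a c : ℕ → E}

lemma norm_le_sqrt_tsum_div (ha : Summable fun k : ℕ => (k : ℝ) ^ 2 * ‖a k‖ ^ 2) {n : ℕ}
    (hn : 0 < n) : ‖a n‖ ≤ √(∑' k : ℕ, (k : ℝ) ^ 2 * ‖a k‖ ^ 2) / n := by
  rw [le_div_iff₀ (by positivity), ← Real.sqrt_sq (by positivity : 0 ≤ ‖a n‖ * n)]
  refine Real.sqrt_le_sqrt ?_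
  rw [mul_pow, mul_comm]
  exact ha.le_tsum n fun k _ => by positivity

lemma norm_le_of_tsum_le_sq (ha : Summable fun k : ℕ => (k : ℝ) ^ 2 * ‖a k‖ ^ 2) {r : ℝ}
    (hr : 0 ≤ r) (hbd : ∑' k : ℕ, (k : ℝ) ^ 2 * ‖a k‖ ^ 2 ≤ r ^ 2) {n : ℕ} (hn : 0 < n) :
    ‖a n‖ ≤ r := by
  refine (norm_le_sqrt_tsum_div ha hn).trans (div_le_of_le_mul₀ n.cast_nonneg hr ?_)
  rw [← Real.sqrt_sq hr]
  exact (Real.sqrt_le_sqrt hbd).trans (le_mul_of_one_le_right (Real.sqrt_nonneg _)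
    (Nat.one_le_cast.2 hn))

lemma summable_mul_norm_sub_sq {w : ℕ → ℝ} (hw : ∀ n, 0 ≤ w n) {d : ℕ → E}
    (ha : Summable fun n => w n * ‖a n - d n‖ ^ 2)
    (hc : Summable fun n => w n * ‖c n - d n‖ ^ 2) :
    Summable fun n => w n * ‖a n - c n‖ ^ 2 := by
  refine .of_nonneg_of_le (fun n => mul_nonneg (hw n) (sq_nonneg _)) (fun n => ?_)
    ((ha.add hc).mul_left 2)
  have hsub : ‖a n - c n‖ ≤ ‖a n - d n‖ + ‖c n - d n‖ := by
    simpa [norm_sub_rev (d n)] using norm_sub_le_norm_sub_add_norm_sub (a n) (d n) (c n)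
  calc w n * ‖a n - c n‖ ^ 2 ≤ w n * (2 * (‖a n - d n‖ ^ 2 + ‖c n - d n‖ ^ 2)) :=
        mul_le_mul_of_nonneg_left ((pow_le_pow_left₀ (norm_nonneg _) hsub 2).trans add_sq_le)
          (hw n)
    _ = 2 * (w n * ‖a n - d n‖ ^ 2 + w n * ‖c n - d n‖ ^ 2) := by ring

end Sequences

noncomputable def perturbationConst (r Cr : ℝ) : ℝ :=
  (4 * Real.exp (π * (6 * r)) * √π * Cr +
    2 * Real.exp (π * (6 * r)) * (1 + 2 * √π * Cr) / (5 * r)) * (1 + 1 / (3 * r))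

lemma perturbation_bounds {W W' : ℝ → ℂ} (hW : MemLp W 2 (volume.restrict (Ioc 0 π)))
    (hW' : MemLp W' 2 (volume.restrict (Ioc 0 π))) {r Cr Ξ : ℝ} {n : ℕ} {b b' : ℂ}
    (hWnorm : √(∫ t in (0:ℝ)..π, ‖W t‖ ^ 2) ≤ Cr)
    (hWdiff : √(∫ t in (0:ℝ)..π, ‖W t - W' t‖ ^ 2) ≤ Cr * Ξ)
    (hr : 0 < r) (hn : 0 < n) (hrn : 12 * r ≤ n) (hb : ‖b - n‖ ≤ r) (hb' : ‖b' - n‖ ≤ r)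
    (hbb' : ‖b - b'‖ ≤ Ξ / n) (hfb : characteristicFn W b = 0)
    (hgb' : characteristicFn W' b' = 0) :
    (∀ z : ℂ, ‖z - b'‖ ≤ 2 * r →
      ‖characteristicFn W z - characteristicFn W' z +
        (b - b') * (characteristicFn W z / (z - b))‖ ≤ perturbationConst r Cr * Ξ / n ^ 2) ∧
    ∀ L : ℂ, Tendsto (fun z => (characteristicFn W z - characteristicFn W' z +
        (b - b') * (characteristicFn W z / (z - b))) / (z - b')) (𝓝[≠] (n : ℂ)) (𝓝 L) →
      ‖L‖ ≤ perturbationConst r Cr * Ξ / n ^ 2 := by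
  have hn₁ : (1 : ℝ) ≤ n := Nat.one_le_cast.2 hn
  have hn₀ : (0 : ℝ) < n := by linarith
  have hCr : 0 ≤ Cr := (Real.sqrt_nonneg _).trans hWnorm
  have hΞ : 0 ≤ Ξ := by
    have := mul_nonneg ((norm_nonneg _).trans hbb') hn₀.le
    rwa [div_mul_cancel₀ _ hn₀.ne'] at this
  have hball : ball b (5 * r) ⊆ closedBall ((n : ℝ) : ℂ) (6 * r) := fun z hz => by
    rw [mem_closedBall, dist_eq_norm, Complex.ofReal_natCast]
    linarith [norm_sub_le_norm_sub_add_norm_sub z b n, mem_ball_iff_norm.1 hz]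
  have hdiff {V : ℝ → ℂ} (hV : MemLp V 2 (volume.restrict (Ioc 0 π))) :
      DifferentiableOn ℂ (characteristicFn V) (ball b (5 * r)) :=
    (differentiableOn_characteristicFn (hV.integrable one_le_two) hn₀ (by linarith)).mono hball
  obtain ⟨hnear, hlim⟩ := perturbation_bounds_of_near hr hb hb' (hdiff hW) (hdiff hW') hfb hgb'
    (fun z hz => mem_closedBall_zero_iff.2
      (norm_characteristicFn_le hW hWnorm hn₁ (by linarith) (hball hz)))
    (fun z hz => by
      rw [characteristicFn_sub (hW.integrable one_le_two) (hW'.integrable one_le_two)]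
      exact norm_cosTransform_div_sq_le (hW.sub hW') hWdiff hn₀ (by linarith) (hball hz))
  set P := (4 * Real.exp (π * (6 * r)) * √π * Cr +
    2 * Real.exp (π * (6 * r)) * (1 + 2 * √π * Cr) / (5 * r)) * Ξ / n ^ 2 with hP
  have hM : 4 * Real.exp (π * (6 * r)) * √π * (Cr * Ξ) / n ^ 2 +
      ‖b - b'‖ * (2 * Real.exp (π * (6 * r)) * (1 + 2 * √π * Cr) / n / (5 * r)) ≤ P := by
    calc _ ≤ 4 * Real.exp (π * (6 * r)) * √π * (Cr * Ξ) / n ^ 2 +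
          Ξ / n * (2 * Real.exp (π * (6 * r)) * (1 + 2 * √π * Cr) / n / (5 * r)) := by gcongr
      _ = P := by rw [hP]; field_simp
  have hconst : perturbationConst r Cr * Ξ / n ^ 2 = P + P / (3 * r) := by
    rw [hP, perturbationConst]; field_simp
  have hP₀ : 0 ≤ P := by positivity
  have hP₁ : 0 ≤ P / (3 * r) := by positivity
  exact ⟨fun z hz => (hnear z hz).trans (by linarith), fun L hL => (hlim L hL).trans
    ((div_le_div_of_nonneg_right hM (by positivity)).trans (by linarith))⟩

theorem stmt18_general (r Cr : ℝ) (hr : 0 < r)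
    (W W' : ℝ → ℂ) (ρ ρ' : ℕ → ℂ) (Δ Δ' : ℂ → ℂ) (Ξ : ℝ)
    (hW : MemLp W 2 (volume.restrict (Set.Ioc (0:ℝ) Real.pi)))
    (hW' : MemLp W' 2 (volume.restrict (Set.Ioc (0:ℝ) Real.pi)))
    (hWnorm : Real.sqrt (∫ t in (0:ℝ)..Real.pi, ‖W t‖ ^ 2) ≤ Cr)
    (hΔ : ∀ z : ℂ, Δ z = Complex.sin (Real.pi * z) / z +
      (∫ t in (0:ℝ)..Real.pi, Complex.cos (t * z) * W t) / z ^ 2)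
    (hΔ' : ∀ z : ℂ, Δ' z = Complex.sin (Real.pi * z) / z +
      (∫ t in (0:ℝ)..Real.pi, Complex.cos (t * z) * W' t) / z ^ 2)
    (hzero : ∀ n : ℕ, 1 ≤ n → Δ (ρ n) = 0)
    (hzero' : ∀ n : ℕ, 1 ≤ n → Δ' (ρ' n) = 0)
    (hsum : Summable fun n : ℕ => (n : ℝ) ^ 2 * ‖ρ n - (n : ℂ)‖ ^ 2)
    (hsum' : Summable fun n : ℕ => (n : ℝ) ^ 2 * ‖ρ' n - (n : ℂ)‖ ^ 2)
    (hbd : ∑' n : ℕ, (n : ℝ) ^ 2 * ‖ρ n - (n : ℂ)‖ ^ 2 ≤ r ^ 2)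
    (hbd' : ∑' n : ℕ, (n : ℝ) ^ 2 * ‖ρ' n - (n : ℂ)‖ ^ 2 ≤ r ^ 2)
    (hΞ : Ξ = Real.sqrt (∑' n : ℕ, (n : ℝ) ^ 2 * ‖ρ n - ρ' n‖ ^ 2))
    (hWdiff : Real.sqrt (∫ t in (0:ℝ)..Real.pi, ‖W t - W' t‖ ^ 2) ≤ Cr * Ξ) :
    (∀ n : ℕ, 1 ≤ n →
      (Δ (ρ' n) - Δ' (ρ' n)) + (ρ n - ρ' n) * (Δ (ρ' n) / (ρ' n - ρ n)) = 0) ∧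
    ∃ C' : ℝ, 0 < C' ∧ ∃ N : ℕ, ∀ n : ℕ, N ≤ n →
      (∀ z : ℂ, ‖z - ρ' n‖ ≤ 2 * r →
        ‖(Δ z - Δ' z) + (ρ n - ρ' n) * (Δ z / (z - ρ n))‖ ≤ C' * Ξ / n ^ 2) ∧
      (∀ L : ℂ, Tendsto (fun z : ℂ =>
          ((Δ z - Δ' z) + (ρ n - ρ' n) * (Δ z / (z - ρ n))) / (z - ρ' n))
          (𝓝[≠] (n : ℂ)) (𝓝 L) → ‖L‖ ≤ C' * Ξ / n ^ 2) := by
  obtain rfl : Δ = characteristicFn W := funext hΔ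
  obtain rfl : Δ' = characteristicFn W' := funext hΔ'
  refine ⟨fun n hn => perturbation_eq_zero (hzero n hn) (hzero' n hn), ?_⟩
  have hC : 0 < perturbationConst r Cr := by
    have := (Real.sqrt_nonneg _).trans hWnorm
    unfold perturbationConst
    positivity
  have hsumΞ := summable_mul_norm_sub_sq (fun n => sq_nonneg (n : ℝ)) hsum hsum'
  refine ⟨perturbationConst r Cr, hC, max 1 ⌈12 * r⌉₊, fun n hn => ?_⟩
  have hn₀ : 0 < n := le_of_max_le_left hn
  have hρρ' : ‖ρ n - ρ' n‖ ≤ Ξ / n := hΞ ▸ norm_le_sqrt_tsum_div hsumΞ hn₀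
  exact perturbation_bounds hW hW' hWnorm hWdiff hr hn₀ (Nat.ceil_le.1 (le_of_max_le_right hn))
    (norm_le_of_tsum_le_sq hsum hr.le hbd hn₀) (norm_le_of_tsum_le_sq hsum' hr.le hbd' hn₀)
    hρρ' (hzero n hn₀) (hzero' n hn₀)

theorem stmt18 (r Cr : ℝ) (hr : 0 < r) (hCr : 0 < Cr)
    (W W' : ℝ → ℂ) (ρ ρ' : ℕ → ℂ) (Δ Δ' : ℂ → ℂ) (Ξ : ℝ)
    (hW : MemLp W 2 (volume.restrict (Set.Ioc (0:ℝ) Real.pi)))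
    (hW' : MemLp W' 2 (volume.restrict (Set.Ioc (0:ℝ) Real.pi)))
    (hWmean : ∫ t in (0:ℝ)..Real.pi, W t = 0)
    (hW'mean : ∫ t in (0:ℝ)..Real.pi, W' t = 0)
    (hWnorm : Real.sqrt (∫ t in (0:ℝ)..Real.pi, ‖W t‖ ^ 2) ≤ Cr)
    (hW'norm : Real.sqrt (∫ t in (0:ℝ)..Real.pi, ‖W' t‖ ^ 2) ≤ Cr)
    (hΔ : ∀ z : ℂ, Δ z = Complex.sin (Real.pi * z) / z +
      (∫ t in (0:ℝ)..Real.pi, Complex.cos (t * z) * W t) / z ^ 2)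
    (hΔ' : ∀ z : ℂ, Δ' z = Complex.sin (Real.pi * z) / z +
      (∫ t in (0:ℝ)..Real.pi, Complex.cos (t * z) * W' t) / z ^ 2)
    (hzero : ∀ n : ℕ, 1 ≤ n → Δ (ρ n) = 0)
    (hzero' : ∀ n : ℕ, 1 ≤ n → Δ' (ρ' n) = 0)
    (hsum : Summable fun n : ℕ => (n : ℝ) ^ 2 * ‖ρ n - (n : ℂ)‖ ^ 2)
    (hsum' : Summable fun n : ℕ => (n : ℝ) ^ 2 * ‖ρ' n - (n : ℂ)‖ ^ 2)
    (hbd : ∑' n : ℕ, (n : ℝ) ^ 2 * ‖ρ n - (n : ℂ)‖ ^ 2 ≤ r ^ 2)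
    (hbd' : ∑' n : ℕ, (n : ℝ) ^ 2 * ‖ρ' n - (n : ℂ)‖ ^ 2 ≤ r ^ 2)
    (hΞ : Ξ = Real.sqrt (∑' n : ℕ, (n : ℝ) ^ 2 * ‖ρ n - ρ' n‖ ^ 2))
    (hWdiff : Real.sqrt (∫ t in (0:ℝ)..Real.pi, ‖W t - W' t‖ ^ 2) ≤ Cr * Ξ) :
    (∀ n : ℕ, 1 ≤ n →
      (Δ (ρ' n) - Δ' (ρ' n)) + (ρ n - ρ' n) * (Δ (ρ' n) / (ρ' n - ρ n)) = 0) ∧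
    ∃ C' : ℝ, 0 < C' ∧ ∃ N : ℕ, ∀ n : ℕ, N ≤ n →
      (∀ z : ℂ, ‖z - ρ' n‖ ≤ 2 * r →
        ‖(Δ z - Δ' z) + (ρ n - ρ' n) * (Δ z / (z - ρ n))‖ ≤ C' * Ξ / n ^ 2) ∧
      (∀ L : ℂ, Tendsto (fun z : ℂ =>
          ((Δ z - Δ' z) + (ρ n - ρ' n) * (Δ z / (z - ρ n))) / (z - ρ' n))
          (𝓝[≠] (n : ℂ)) (𝓝 L) → ‖L‖ ≤ C' * Ξ / n ^ 2) :=
  stmt18_general r Cr hr W W' ρ ρ' Δ Δ' Ξ hW hW' hWnorm hΔ hΔ' hzero hzero' hsum hsum' hbd hbd' hΞ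
    hWdiff
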